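/- arXiv:2405.00368 — 4 statements merged into one kernel-verified Lean document; each statement's English description precedes it below -/
import Mathlib

section
/- For all real c and s with 0 < c < 1 and 0 < s < 4, the minimum of the three quantities (1/2)·log₂ A(c,s), (1/2)·log₂ B(c,s), and (1/2)·log₂ C(c,s) equals (1/2)·log₂ B(c,s); equivalently, B(c,s) ≤ A(c,s) and B(c,s) ≤ C(c,s). -/
/-!
`B ≤ A` reduces, after clearing the denominator `2c² + 2`, to `c⁴s ≤ c²s`, i.e. `c² ≤ 1`.
`B` and `C` share their numerator, so `B ≤ C` amounts to comparing denominators, i.e. to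
`c³s/(c²s + 1) ≤ c²`, which is `c²(c²s - cs + 1) ≥ 0`; the quadratic `c²s - cs + 1` in `c`
has discriminant `s(s - 4) ≤ 0` for `0 ≤ s ≤ 4`.
-/

open Real

/-- `A c s = c²·s + 1`, the argument of the logarithm in `TE(φ→X) = TE(φ→Y)`. -/
noncomputable def A (c s : ℝ) : ℝ := c ^ 2 * s + 1

/-- `B c s = (4c⁴s + 2c² + 2)/(2c² + 2)`, the argument of the logarithm in `TE(φ→Z)`. -/
noncomputable def B (c s : ℝ) : ℝ := (4 * c ^ 4 * s + 2 * c ^ 2 + 2) / (2 * c ^ 2 + 2)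

/-- `C c s = (4c⁴s + 2c² + 2)/(c³s/(c²s+1) + c² + 2)`, the argument of the logarithm in
`TE(X→Z) = TE(Y→Z)`. -/
noncomputable def C (c s : ℝ) : ℝ :=
  (4 * c ^ 4 * s + 2 * c ^ 2 + 2) / (c ^ 3 * s / (c ^ 2 * s + 1) + c ^ 2 + 2)

section

variable {s : ℝ}

lemma B_pos (c : ℝ) (hs : 0 ≤ s) : 0 < B c s := by
  unfold B
  positivity

lemma B_le_A {c : ℝ} (hc : c ^ 2 ≤ 1) (hs : 0 ≤ s) : B c s ≤ A c s := by
  rw [B, A, div_le_iff₀ (by positivity)]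
  nlinarith [mul_nonneg (mul_nonneg (sq_nonneg c) hs) (sub_nonneg.2 hc)]

lemma mul_le_sq_mul_add_one (c : ℝ) (hs0 : 0 ≤ s) (hs4 : s ≤ 4) : c * s ≤ c ^ 2 * s + 1 := by
  nlinarith [mul_nonneg hs0 (sq_nonneg (2 * c - 1))]

lemma cube_mul_div_le_sq (c : ℝ) (hs0 : 0 ≤ s) (hs4 : s ≤ 4) :
    c ^ 3 * s / (c ^ 2 * s + 1) ≤ c ^ 2 := by
  rw [div_le_iff₀ (by positivity)]
  nlinarith [mul_le_mul_of_nonneg_left (mul_le_sq_mul_add_one c hs0 hs4) (sq_nonneg c)]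

lemma C_denom_pos (c : ℝ) (hs : 0 ≤ s) : 0 < c ^ 3 * s / (c ^ 2 * s + 1) + c ^ 2 + 2 := by
  have hpos : 0 < c ^ 2 * s + 1 := by positivity
  have key : 0 < c ^ 3 * s + (c ^ 2 * s + 1) * (c ^ 2 + 2) := by
    nlinarith [mul_nonneg (mul_nonneg (sq_nonneg c) hs) (sq_nonneg (c + 1 / 2))]
  have : c ^ 3 * s / (c ^ 2 * s + 1) + c ^ 2 + 2
      = (c ^ 3 * s + (c ^ 2 * s + 1) * (c ^ 2 + 2)) / (c ^ 2 * s + 1) := by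
    field_simp
    ring
  rw [this]
  positivity

lemma B_le_C (c : ℝ) (hs0 : 0 ≤ s) (hs4 : s ≤ 4) : B c s ≤ C c s := by
  unfold B C
  apply div_le_div_of_nonneg_left (by positivity) (C_denom_pos c hs0)
  linarith [cube_mul_div_le_sq c hs0 hs4]

end

/-- For `0 < c < 1` and `0 < s < 4`, the minimum of the three transfer-entropy expressions
is `(1/2)·log₂ B(c,s)`; equivalently `B(c,s) ≤ A(c,s)` and `B(c,s) ≤ C(c,s)`. -/
theorem stmt0 (c s : ℝ) (hc0 : 0 < c) (hc1 : c < 1) (hs0 : 0 < s) (hs4 : s < 4) :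
    min (min ((1 / 2) * Real.logb 2 (A c s)) ((1 / 2) * Real.logb 2 (B c s)))
        ((1 / 2) * Real.logb 2 (C c s)) = (1 / 2) * Real.logb 2 (B c s)
      ∧ B c s ≤ A c s ∧ B c s ≤ C c s := by
  have hBA : B c s ≤ A c s := B_le_A (by nlinarith) hs0.le
  have hBC : B c s ≤ C c s := B_le_C c hs0.le hs4.le
  have hB := B_pos c hs0.le
  have half_logb_le {x y : ℝ} (hx : 0 < x) (hxy : x ≤ y) :
      (1 / 2) * logb 2 x ≤ (1 / 2) * logb 2 y := by
    gcongr
    norm_num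
  refine ⟨?_, hBA, hBC⟩
  rw [min_eq_right (half_logb_le hB hBA), min_eq_left (half_logb_le hB hBC)]
end

section
/- For all real c and s with c ≥ 1 and 0 < s < 4, the minimum of the three quantities (1/2)·log₂ A(c,s), (1/2)·log₂ B(c,s), and (1/2)·log₂ C(c,s) equals (1/2)·log₂ A(c,s); equivalently, A(c,s) ≤ B(c,s) and A(c,s) ≤ C(c,s). -/
/-!
Both inequalities are polynomial after clearing denominators:
`B - A = c²s(c² - 1)/(c² + 1)`, and since `A` times the denominator of `C` is
`c³s + A(c² + 2)`, the inequality `A ≤ C` reduces to `c²s(c - 1)(3c + 2) + c² ≥ 0`.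
-/

open Real

lemma A_pos (c : ℝ) {s : ℝ} (hs : 0 ≤ s) : 0 < A c s := by
  unfold A
  positivity

lemma B_sub_A (c s : ℝ) : B c s - A c s = c ^ 2 * s * (c ^ 2 - 1) / (c ^ 2 + 1) := by
  unfold A B
  field_simp
  ring

lemma A_le_B {c s : ℝ} (hc : 1 ≤ c ^ 2) (hs : 0 ≤ s) : A c s ≤ B c s := by
  have hBA : 0 ≤ B c s - A c s := by
    rw [B_sub_A]
    have : 0 ≤ c ^ 2 - 1 := sub_nonneg.mpr hc
    positivity
  linarith

lemma A_mul_denom_C {c s : ℝ} (hs : 0 ≤ s) :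
    A c s * (c ^ 3 * s / (c ^ 2 * s + 1) + c ^ 2 + 2) = c ^ 3 * s + A c s * (c ^ 2 + 2) := by
  have hA := A_pos c hs
  unfold A at *
  field_simp
  ring

lemma A_le_C {c s : ℝ} (hc : 1 ≤ c) (hs : 0 ≤ s) : A c s ≤ C c s := by
  have hc0 : 0 ≤ c := zero_le_one.trans hc
  have hA := A_pos c hs
  have hdenom : 0 < c ^ 3 * s / (c ^ 2 * s + 1) + c ^ 2 + 2 := by positivity
  have hgap : 4 * c ^ 4 * s + 2 * c ^ 2 + 2 - (c ^ 3 * s + A c s * (c ^ 2 + 2))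
      = c ^ 2 * s * (c - 1) * (3 * c + 2) + c ^ 2 := by
    unfold A
    ring
  have hgap_nonneg : 0 ≤ c ^ 2 * s * (c - 1) * (3 * c + 2) + c ^ 2 := by
    have : 0 ≤ c - 1 := sub_nonneg.mpr hc
    positivity
  rw [C, le_div_iff₀ hdenom, A_mul_denom_C hs]
  linarith

theorem stmt1_general (c s : ℝ) (hc : 1 ≤ c) (hs0 : 0 < s) :
    min (min ((1 / 2) * Real.logb 2 (A c s)) ((1 / 2) * Real.logb 2 (B c s)))
        ((1 / 2) * Real.logb 2 (C c s)) = (1 / 2) * Real.logb 2 (A c s)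
      ∧ A c s ≤ B c s ∧ A c s ≤ C c s := by
  have hA := A_pos c hs0.le
  have hAB := A_le_B (one_le_pow₀ hc) hs0.le
  have hAC := A_le_C hc hs0.le
  have hlogAB : (1 / 2) * logb 2 (A c s) ≤ (1 / 2) * logb 2 (B c s) := by gcongr; norm_num
  have hlogAC : (1 / 2) * logb 2 (A c s) ≤ (1 / 2) * logb 2 (C c s) := by gcongr; norm_num
  exact ⟨by rw [min_eq_left hlogAB, min_eq_left hlogAC], hAB, hAC⟩

/-- For `c ≥ 1` and `0 < s < 4`, the minimum of the three transfer-entropy expressions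
is `(1/2)·log₂ A(c,s)`; equivalently `A(c,s) ≤ B(c,s)` and `A(c,s) ≤ C(c,s)`. -/
theorem stmt1 (c s : ℝ) (hc : 1 ≤ c) (hs0 : 0 < s) (hs4 : s < 4) :
    min (min ((1 / 2) * Real.logb 2 (A c s)) ((1 / 2) * Real.logb 2 (B c s)))
        ((1 / 2) * Real.logb 2 (C c s)) = (1 / 2) * Real.logb 2 (A c s)
      ∧ A c s ≤ B c s ∧ A c s ≤ C c s :=
  stmt1_general c s hc hs0
end

section
/- For all real c > 0 and s > 0, B(c,s) ≤ A(c,s) if and only if c ≤ 1. -/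
/-! The difference `A - B` factors as `c²s(1 - c²)/(c² + 1)`, so for `c, s > 0` its sign is that of
`1 - c²`. -/

theorem A_sub_B (c s : ℝ) : A c s - B c s = c ^ 2 * s * (1 - c ^ 2) / (c ^ 2 + 1) := by
  rw [A, B, eq_div_iff (by positivity)]
  field_simp
  ring

theorem B_le_A_iff_sq_le_one {c s : ℝ} (hc : c ≠ 0) (hs : 0 < s) :
    B c s ≤ A c s ↔ c ^ 2 ≤ 1 := by
  have hfactor : 0 < c ^ 2 * s / (c ^ 2 + 1) := by positivity
  rw [← sub_nonneg, A_sub_B, mul_div_right_comm, mul_nonneg_iff_of_pos_left hfactor, sub_nonneg]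

/-- For all real `c > 0` and `s > 0`, `B(c,s) ≤ A(c,s)` if and only if `c ≤ 1`. -/
theorem stmt3 (c s : ℝ) (hc : 0 < c) (hs : 0 < s) :
    B c s ≤ A c s ↔ c ≤ 1 := by
  rw [B_le_A_iff_sq_le_one hc.ne' hs, sq_le_one_iff₀ hc.le]
end

section
/- For all real c > 0 and s > 0, B(c,s) ≤ C(c,s) if and only if s·c² − s·c + 1 ≥ 0. -/
section

variable {c s : ℝ}

lemma pow_three_mul_div_le_sq_iff (hc : 0 < c) (hs : 0 < s) :
    c ^ 3 * s / (c ^ 2 * s + 1) ≤ c ^ 2 ↔ 0 ≤ s * c ^ 2 - s * c + 1 := by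
  have hc2 : 0 < c ^ 2 := by positivity
  calc c ^ 3 * s / (c ^ 2 * s + 1) ≤ c ^ 2
      ↔ c ^ 2 * (s * c) ≤ c ^ 2 * (s * c ^ 2 + 1) := by
        rw [div_le_iff₀ (by positivity)]; ring_nf
    _ ↔ s * c ≤ s * c ^ 2 + 1 := mul_le_mul_iff_right₀ hc2
    _ ↔ 0 ≤ s * c ^ 2 - s * c + 1 := by constructor <;> intro h <;> linarith

lemma denom_C_le_denom_B_iff (hc : 0 < c) (hs : 0 < s) :
    c ^ 3 * s / (c ^ 2 * s + 1) + c ^ 2 + 2 ≤ 2 * c ^ 2 + 2 ↔ 0 ≤ s * c ^ 2 - s * c + 1 := by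
  rw [← pow_three_mul_div_le_sq_iff hc hs]
  constructor <;> intro h <;> linarith

end

/-- For all real `c > 0` and `s > 0`, `B(c,s) ≤ C(c,s)` iff `s·c² − s·c + 1 ≥ 0`. -/
theorem stmt4 (c s : ℝ) (hc : 0 < c) (hs : 0 < s) :
    B c s ≤ C c s ↔ 0 ≤ s * c ^ 2 - s * c + 1 := by
  rw [B, C, div_le_div_iff_of_pos_left (by positivity) (by positivity) (by positivity)]
  exact denom_C_le_denom_B_iff hc hs
end
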